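/- The transformed divergence expression equals the conjugated discrete divergence: for every U ∈ ℝ^{n×(n−1)} and V ∈ ℝ^{(n−1)×n}, with Û = Cᵀ U S and V̂ = S V C, one has Γ Û Σ + Σ V̂ Γᵀ = S (B U D + D V Bᵀ) S. In particular Γ Û Σ + Σ V̂ Γᵀ = 0 if and only if B U D + D V Bᵀ = 0. -/

import Mathlib

open Matrix Real

/-- `τ_i = -2 sin(iπ/(2n))`. -/
noncomputable def tau (n i : ℕ) : ℝ := -2 * Real.sin ((i : ℝ) * Real.pi / (2 * n))

/-- `σ_i = 2(2 + cos(iπ/n))`. -/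
noncomputable def sigma (n i : ℕ) : ℝ := 2 * (2 + Real.cos ((i : ℝ) * Real.pi / n))

/-- Mass matrix `D ∈ ℝ^{(n-1)×(n-1)}`. -/
def Dmat (n : ℕ) : Matrix (Fin (n - 1)) (Fin (n - 1)) ℝ :=
  Matrix.of fun k l =>
    if (k : ℕ) = (l : ℕ) then 4
    else if (k : ℕ) + 1 = (l : ℕ) ∨ (l : ℕ) + 1 = (k : ℕ) then 1 else 0

/-- Discrete divergence matrix `B ∈ ℝ^{(n-1)×n}`. -/
def Bmat (n : ℕ) : Matrix (Fin (n - 1)) (Fin n) ℝ :=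
  Matrix.of fun k l =>
    if (l : ℕ) = (k : ℕ) then -1 else if (l : ℕ) = (k : ℕ) + 1 then 1 else 0

/-- The DST-I matrix `S`. -/
noncomputable def Smat (n : ℕ) : Matrix (Fin (n - 1)) (Fin (n - 1)) ℝ :=
  Matrix.of fun k j => Real.sin (((((k : ℕ) + 1) * ((j : ℕ) + 1) : ℕ) : ℝ) * Real.pi / n)

/-- The DCT matrix `C = (c_0, …, c_{n-1})`. -/
noncomputable def Cmat (n : ℕ) : Matrix (Fin n) (Fin n) ℝ :=
  Matrix.of fun k j =>
    (if (j : ℕ) = 0 then 1 / Real.sqrt 2 else 1) *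
      Real.cos (((2 * (k : ℕ) + 1) * (j : ℕ) : ℕ) * Real.pi / (2 * n))

/-- `Σ = diag(σ_1, …, σ_{n-1})`. -/
noncomputable def Sig (n : ℕ) : Matrix (Fin (n - 1)) (Fin (n - 1)) ℝ :=
  Matrix.diagonal fun j => sigma n ((j : ℕ) + 1)

/-- `Γ = [0, Λ] ∈ ℝ^{(n-1)×n}` (zero first column). -/
noncomputable def Gam (n : ℕ) : Matrix (Fin (n - 1)) (Fin n) ℝ :=
  Matrix.of fun k l => if (l : ℕ) = (k : ℕ) + 1 then tau n ((k : ℕ) + 1) else 0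

lemma cos_telescope (θ : ℝ) (N : ℕ) :
    (∑ k ∈ Finset.range N, Real.cos (k * θ)) * (2 * Real.sin (θ / 2)) =
      Real.sin (N * θ - θ / 2) + Real.sin (θ / 2) := by
  induction N with
  | zero => simp [Real.sin_neg]
  | succ N ih =>
    rw [Finset.sum_range_succ, add_mul, ih]
    have h1 : ((N:ℝ)+1) * θ - θ/2 = N*θ + θ/2 := by ring
    push_cast
    rw [h1, Real.sin_add, Real.sin_sub]
    ring

lemma cos_sum1 (n m : ℕ) (h1 : 0 < m) (h2 : m < 2 * n) :
    ∑ j ∈ Finset.range (n - 1), Real.cos ((((j + 1) * m : ℕ) : ℝ) * π / n) =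
      if m % 2 = 0 then -1 else 0 := by
  have hn : 0 < n := by omega
  have hpi := Real.pi_pos
  set θ : ℝ := (m : ℝ) * π / n with hθ
  have hx : 0 < θ / 2 := by
    have : (0:ℝ) < (m:ℝ) * π := by positivity
    positivity
  have hx2 : θ / 2 < π := by
    rw [hθ, div_div, div_lt_iff₀ (by positivity : (0:ℝ) < (n:ℝ) * 2)]
    have : (m:ℝ) < 2 * n := by exact_mod_cast h2
    nlinarith
  have hs : 0 < Real.sin (θ / 2) := Real.sin_pos_of_pos_of_lt_pi hx hx2
  -- full sum over range n
  have htel := cos_telescope θ n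
  have hnθ : (n:ℝ) * θ = (m:ℝ) * π := by
    rw [hθ]; field_simp
  have hsin : Real.sin ((n:ℝ) * θ - θ/2) = -((-1)^m * Real.sin (θ/2)) := by
    rw [hnθ]; exact Real.sin_nat_mul_pi_sub (θ/2) m
  have hfull : ∑ k ∈ Finset.range n, Real.cos (k * θ) =
      if m % 2 = 0 then 0 else 1 := by
    rcases Nat.even_or_odd m with he | ho
    · have : (-1:ℝ)^m = 1 := he.neg_one_pow
      rw [if_pos (Nat.even_iff.mp he)]
      have h0 : (∑ k ∈ Finset.range n, Real.cos (k * θ)) * (2 * Real.sin (θ/2)) = 0 := by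
        rw [htel, hsin, this]; ring
      rcases mul_eq_zero.mp h0 with h | h
      · exact h
      · exfalso; nlinarith
    · have hneg : (-1:ℝ)^m = -1 := ho.neg_one_pow
      have hm1 : m % 2 = 1 := Nat.odd_iff.mp ho
      rw [if_neg (by omega)]
      have h0 : (∑ k ∈ Finset.range n, Real.cos (k * θ)) * (2 * Real.sin (θ/2)) =
          1 * (2 * Real.sin (θ/2)) := by
        rw [htel, hsin, hneg]; ring
      exact mul_right_cancel₀ (by positivity) h0
  -- shift: range n = range ((n-1)+1)
  have hsplit : ∑ k ∈ Finset.range n, Real.cos (k * θ) =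
      (∑ j ∈ Finset.range (n-1), Real.cos (((j:ℝ)+1) * θ)) + 1 := by
    rw [show n = (n-1)+1 by omega, Finset.sum_range_succ']
    push_cast
    norm_num
  have harg : ∀ j : ℕ, ((((j + 1) * m : ℕ) : ℝ) * π / n) = ((j:ℝ)+1) * θ := by
    intro j; rw [hθ]; push_cast; field_simp
  calc ∑ j ∈ Finset.range (n - 1), Real.cos ((((j + 1) * m : ℕ) : ℝ) * π / n)
      = ∑ j ∈ Finset.range (n-1), Real.cos (((j:ℝ)+1) * θ) := by
        exact Finset.sum_congr rfl fun j _ => by rw [harg j]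
    _ = (if m % 2 = 0 then 0 else 1) - 1 := by
        have := hfull
        rw [hsplit] at this
        linarith
    _ = if m % 2 = 0 then -1 else 0 := by split_ifs <;> norm_num

lemma sum_fin_ite {m : ℕ} (c : ℕ) (hc : c < m) (f : Fin m → ℝ) :
    ∑ j : Fin m, (if (j : ℕ) = c then f j else 0) = f ⟨c, hc⟩ := by
  rw [Finset.sum_eq_single (⟨c, hc⟩ : Fin m)]
  · simp
  · intro b _ hb
    rw [if_neg (fun h => hb (Fin.ext h))]
  · intro h; exact absurd (Finset.mem_univ _) h

lemma sum_fin_ite_zero {m : ℕ} (c : ℕ) (hc : m ≤ c) (f : Fin m → ℝ) :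
    ∑ j : Fin m, (if (j : ℕ) = c then f j else 0) = 0 := by
  apply Finset.sum_eq_zero
  intro j _
  rw [if_neg (by have := j.isLt; omega)]

lemma trig1 (n k l : ℕ) (hn : n ≠ 0) :
    Real.sin (((k * l : ℕ) : ℝ) * π / n) - Real.sin (((k * (l + 1) : ℕ) : ℝ) * π / n) =
      tau n k * Real.cos ((((2 * l + 1) * k : ℕ) : ℝ) * π / (2 * n)) := by
  have hn' : (n:ℝ) ≠ 0 := Nat.cast_ne_zero.mpr hn
  have e1 : ((k * l : ℕ) : ℝ) * π / n =
      (((2 * l + 1) * k : ℕ) : ℝ) * π / (2 * n) - (k : ℝ) * π / (2 * n) := by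
    push_cast; field_simp; ring
  have e2 : ((k * (l + 1) : ℕ) : ℝ) * π / n =
      (((2 * l + 1) * k : ℕ) : ℝ) * π / (2 * n) + (k : ℝ) * π / (2 * n) := by
    push_cast; field_simp; ring
  rw [e1, e2, Real.sin_sub, Real.sin_add, tau]
  ring

lemma trig2 (n k j : ℕ) (hn : n ≠ 0) :
    Real.sin (((k * (j + 1) : ℕ) : ℝ) * π / n) +
      Real.sin ((((k + 2) * (j + 1) : ℕ) : ℝ) * π / n) +
      4 * Real.sin ((((k + 1) * (j + 1) : ℕ) : ℝ) * π / n) =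
      Real.sin ((((k + 1) * (j + 1) : ℕ) : ℝ) * π / n) * sigma n (j + 1) := by
  have hn' : (n:ℝ) ≠ 0 := Nat.cast_ne_zero.mpr hn
  have e1 : ((k * (j + 1) : ℕ) : ℝ) * π / n =
      (((k + 1) * (j + 1) : ℕ) : ℝ) * π / n - ((j:ℝ) + 1) * π / n := by
    push_cast; field_simp; ring
  have e2 : (((k + 2) * (j + 1) : ℕ) : ℝ) * π / n =
      (((k + 1) * (j + 1) : ℕ) : ℝ) * π / n + ((j:ℝ) + 1) * π / n := by
    push_cast; field_simp; ring
  rw [e1, e2, Real.sin_sub, Real.sin_add, sigma]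
  push_cast
  ring

lemma GamCT (n : ℕ) (hn : 2 ≤ n) : Gam n * (Cmat n)ᵀ = Smat n * Bmat n := by
  have hn0 : n ≠ 0 := by omega
  ext k l
  have hk1 : (k : ℕ) + 1 < n := by have := k.isLt; omega
  -- LHS
  have hL : (Gam n * (Cmat n)ᵀ) k l =
      tau n ((k:ℕ)+1) * Real.cos ((((2 * (l:ℕ) + 1) * ((k:ℕ)+1) : ℕ) : ℝ) * π / (2 * n)) := by
    rw [Matrix.mul_apply]
    simp only [Gam, Cmat, Matrix.of_apply, Matrix.transpose_apply, ite_mul, zero_mul]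
    rw [sum_fin_ite ((k:ℕ)+1) hk1]
    simp only [Fin.val_mk]
    rw [if_neg (by omega), one_mul]
  -- RHS: split B
  have hR : (Smat n * Bmat n) k l =
      -Real.sin (((((k:ℕ)+1) * ((l:ℕ)+1) : ℕ) : ℝ) * π / n) +
      Real.sin (((((k:ℕ)+1) * (l:ℕ) : ℕ) : ℝ) * π / n) := ?hR
  case _ =>
    have ht := trig1 n ((k:ℕ)+1) (l:ℕ) hn0
    rw [hL, hR, ← ht]; ring
  case hR =>
  rw [Matrix.mul_apply]
  have hBmul : ∀ j : Fin (n-1), Smat n k j * Bmat n j l =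
      (if (j:ℕ) = (l:ℕ) then -(Smat n k j) else 0) +
      (if (j:ℕ) = (l:ℕ)-1 ∧ 1 ≤ (l:ℕ) then Smat n k j else 0) := by
    intro j
    simp only [Bmat, Matrix.of_apply]
    by_cases h1 : (l:ℕ) = (j:ℕ) <;> by_cases h2 : (l:ℕ) = (j:ℕ)+1
    · exact absurd h2 (by omega)
    · rw [if_pos h1, if_pos h1.symm, if_neg (by omega)]; ring
    · rw [if_neg h1, if_pos h2, if_neg (by omega), if_pos (by omega)]; ring
    · rw [if_neg h1, if_neg h2, if_neg (by omega), if_neg (by omega)]; ring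
  -- first sum
  have hS1 : ∑ j : Fin (n-1), (if (j:ℕ) = (l:ℕ) then -(Smat n k j) else 0) =
      -Real.sin (((((k:ℕ)+1) * ((l:ℕ)+1) : ℕ) : ℝ) * π / n) := by
    rcases Nat.lt_or_ge (l:ℕ) (n-1) with hln | hln
    · rw [sum_fin_ite (l:ℕ) hln _]
      simp only [Smat, Matrix.of_apply, Fin.val_mk]
    · have hl : (l:ℕ) = n - 1 := by have := l.isLt; omega
      rw [sum_fin_ite_zero (l:ℕ) hln _]
      have hzero : Real.sin (((((k:ℕ)+1) * ((l:ℕ)+1) : ℕ) : ℝ) * π / n) = 0 := by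
        rw [show ((l:ℕ)+1) = n by omega]
        rw [show ((((k:ℕ)+1) * n : ℕ) : ℝ) * π / n = (((k:ℕ)+1 : ℕ) : ℝ) * π by
          push_cast; field_simp]
        exact Real.sin_nat_mul_pi _
      rw [hzero, neg_zero]
  -- second sum
  have hS2 : ∑ j : Fin (n-1), (if (j:ℕ) = (l:ℕ)-1 ∧ 1 ≤ (l:ℕ) then Smat n k j else 0) =
      Real.sin (((((k:ℕ)+1) * (l:ℕ) : ℕ) : ℝ) * π / n) := by
    rcases Nat.lt_or_ge (l:ℕ) 1 with hl0 | hl1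
    · have hl : (l:ℕ) = 0 := by omega
      rw [Finset.sum_eq_zero (fun j _ => by rw [if_neg (by omega)])]
      rw [hl, Nat.mul_zero]
      norm_num
    · have hcong : ∀ j : Fin (n-1), (if (j:ℕ) = (l:ℕ)-1 ∧ 1 ≤ (l:ℕ) then Smat n k j else 0) =
          (if (j:ℕ) = (l:ℕ)-1 then Smat n k j else 0) := by
        intro j; apply if_congr (by omega) rfl rfl
      simp only [hcong]
      rw [sum_fin_ite ((l:ℕ)-1) (by have := l.isLt; omega) _]
      simp only [Smat, Matrix.of_apply, Fin.val_mk]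
      rw [show ((l:ℕ)-1)+1 = (l:ℕ) by omega]
  simp only [hBmul]
  rw [Finset.sum_add_distrib, hS1, hS2]

lemma DSmul (n : ℕ) (hn : 2 ≤ n) : Dmat n * Smat n = Smat n * Sig n := by
  have hn0 : n ≠ 0 := by omega
  ext k j
  have hk := k.isLt
  have hj := j.isLt
  rw [Matrix.mul_apply, Sig, Matrix.mul_diagonal]
  have hDmul : ∀ i : Fin (n-1), Dmat n k i * Smat n i j =
      (if (i:ℕ) = (k:ℕ) then 4 * Smat n i j else 0) +
      (if (i:ℕ) = (k:ℕ)+1 then Smat n i j else 0) +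
      (if (i:ℕ) = (k:ℕ)-1 ∧ 1 ≤ (k:ℕ) then Smat n i j else 0) := by
    intro i
    simp only [Dmat, Matrix.of_apply]
    by_cases h1 : (k:ℕ) = (i:ℕ)
    · rw [if_pos h1, if_pos h1.symm, if_neg (by omega), if_neg (by omega)]; ring
    · rw [if_neg h1]
      by_cases h2 : (k:ℕ)+1 = (i:ℕ)
      · rw [if_pos (Or.inl h2), if_neg (by omega), if_pos h2.symm, if_neg (by omega)]; ring
      · by_cases h3 : (i:ℕ)+1 = (k:ℕ)
        · rw [if_pos (Or.inr h3), if_neg (by omega), if_neg (by omega), if_pos (by omega)]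
          ring
        · rw [if_neg (by tauto), if_neg (by omega), if_neg (by omega), if_neg (by omega)]
          ring
  simp only [hDmul]
  rw [Finset.sum_add_distrib, Finset.sum_add_distrib]
  have hT1 : ∑ i : Fin (n-1), (if (i:ℕ) = (k:ℕ) then 4 * Smat n i j else 0) =
      4 * Real.sin (((((k:ℕ)+1) * ((j:ℕ)+1) : ℕ) : ℝ) * π / n) := by
    rw [sum_fin_ite (k:ℕ) hk _]
    simp only [Smat, Matrix.of_apply, Fin.val_mk]
  have hT2 : ∑ i : Fin (n-1), (if (i:ℕ) = (k:ℕ)+1 then Smat n i j else 0) =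
      Real.sin (((((k:ℕ)+2) * ((j:ℕ)+1) : ℕ) : ℝ) * π / n) := by
    rcases Nat.lt_or_ge ((k:ℕ)+1) (n-1) with hkn | hkn
    · rw [sum_fin_ite ((k:ℕ)+1) hkn _]
      simp only [Smat, Matrix.of_apply, Fin.val_mk]
    · rw [sum_fin_ite_zero ((k:ℕ)+1) hkn _]
      rw [show (k:ℕ)+2 = n by omega]
      rw [show ((n * ((j:ℕ)+1) : ℕ) : ℝ) * π / n = ((((j:ℕ)+1 : ℕ)) : ℝ) * π by
        push_cast; field_simp]
      rw [Real.sin_nat_mul_pi]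
  have hT3 : ∑ i : Fin (n-1), (if (i:ℕ) = (k:ℕ)-1 ∧ 1 ≤ (k:ℕ) then Smat n i j else 0) =
      Real.sin ((((k:ℕ) * ((j:ℕ)+1) : ℕ) : ℝ) * π / n) := by
    rcases Nat.lt_or_ge (k:ℕ) 1 with hk0 | hk1
    · rw [Finset.sum_eq_zero (fun i _ => by rw [if_neg (by omega)])]
      rw [show (k:ℕ) = 0 by omega, Nat.zero_mul]
      norm_num
    · have hcong : ∀ i : Fin (n-1), (if (i:ℕ) = (k:ℕ)-1 ∧ 1 ≤ (k:ℕ) then Smat n i j else 0) =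
          (if (i:ℕ) = (k:ℕ)-1 then Smat n i j else 0) := by
        intro i; apply if_congr (by omega) rfl rfl
      simp only [hcong]
      rw [sum_fin_ite ((k:ℕ)-1) (by omega) _]
      simp only [Smat, Matrix.of_apply, Fin.val_mk]
      rw [show ((k:ℕ)-1)+1 = (k:ℕ) by omega]
  rw [hT1, hT2, hT3]
  have ht := trig2 n (k:ℕ) (j:ℕ) hn0
  simp only [Smat, Matrix.of_apply]
  linarith

lemma SS_aux (n a b : ℕ) (hn : 2 ≤ n) (ha : a < n - 1) (hb : b ≤ a) :
    ∑ j ∈ Finset.range (n - 1),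
        Real.sin ((((a + 1) * (j + 1) : ℕ) : ℝ) * π / n) *
          Real.sin ((((b + 1) * (j + 1) : ℕ) : ℝ) * π / n) =
      if a = b then (n : ℝ) / 2 else 0 := by
  have hn0 : (n:ℝ) ≠ 0 := by positivity
  have hterm : ∀ j : ℕ,
      Real.sin ((((a + 1) * (j + 1) : ℕ) : ℝ) * π / n) *
        Real.sin ((((b + 1) * (j + 1) : ℕ) : ℝ) * π / n) =
      (Real.cos ((((j + 1) * (a - b) : ℕ) : ℝ) * π / n) -
       Real.cos ((((j + 1) * (a + b + 2) : ℕ) : ℝ) * π / n)) / 2 := by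
    intro j
    have e1 : (((j + 1) * (a - b) : ℕ) : ℝ) * π / n =
        (((a + 1) * (j + 1) : ℕ) : ℝ) * π / n - (((b + 1) * (j + 1) : ℕ) : ℝ) * π / n := by
      push_cast [hb]
      field_simp
      ring
    have e2 : (((j + 1) * (a + b + 2) : ℕ) : ℝ) * π / n =
        (((a + 1) * (j + 1) : ℕ) : ℝ) * π / n + (((b + 1) * (j + 1) : ℕ) : ℝ) * π / n := by
      push_cast
      field_simp
      ring
    rw [e1, e2, Real.cos_sub, Real.cos_add]
    ring
  simp only [hterm]
  rw [← Finset.sum_div, Finset.sum_sub_distrib]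
  have hsum2 : ∑ j ∈ Finset.range (n - 1),
      Real.cos ((((j + 1) * (a + b + 2) : ℕ) : ℝ) * π / n) =
      if (a + b + 2) % 2 = 0 then (-1:ℝ) else 0 :=
    cos_sum1 n (a + b + 2) (by omega) (by omega)
  by_cases hab : a = b
  · subst hab
    have hsum1 : ∑ j ∈ Finset.range (n - 1),
        Real.cos ((((j + 1) * (a - a) : ℕ) : ℝ) * π / n) = (n : ℝ) - 1 := by
      have hone : ∀ j ∈ Finset.range (n-1), Real.cos ((((j + 1) * (a - a) : ℕ) : ℝ) * π / n) = 1 := by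
        intro j _
        rw [Nat.sub_self, Nat.mul_zero]
        norm_num
      rw [Finset.sum_congr rfl hone, Finset.sum_const, Finset.card_range, nsmul_eq_mul, mul_one]
      have h1n : 1 ≤ n := by omega
      push_cast [Nat.cast_sub h1n]
      ring
    rw [hsum1, hsum2, if_pos (by omega), if_pos rfl]
    ring
  · have hba : b < a := by omega
    have hsum1 : ∑ j ∈ Finset.range (n - 1),
        Real.cos ((((j + 1) * (a - b) : ℕ) : ℝ) * π / n) =
        if (a - b) % 2 = 0 then (-1:ℝ) else 0 :=
      cos_sum1 n (a - b) (by omega) (by omega)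
    rw [hsum1, hsum2, if_neg hab]
    have hpar : (a - b) % 2 = (a + b + 2) % 2 := by omega
    rw [hpar]
    split_ifs <;> ring

lemma SSid (n : ℕ) (hn : 2 ≤ n) :
    Smat n * Smat n = ((n:ℝ)/2) • (1 : Matrix (Fin (n-1)) (Fin (n-1)) ℝ) := by
  ext k l
  rw [Matrix.mul_apply, Matrix.smul_apply, Matrix.one_apply]
  have hswap : ∀ j : Fin (n-1), Smat n k j * Smat n j l =
      Real.sin (((((k:ℕ)+1) * ((j:ℕ)+1) : ℕ) : ℝ) * π / n) *
      Real.sin (((((l:ℕ)+1) * ((j:ℕ)+1) : ℕ) : ℝ) * π / n) := by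
    intro j
    simp only [Smat, Matrix.of_apply]
    rw [Nat.mul_comm ((j:ℕ)+1) ((l:ℕ)+1)]
  simp only [hswap]
  rw [Fin.sum_univ_eq_sum_range (fun j => Real.sin (((((k:ℕ)+1) * (j+1) : ℕ) : ℝ) * π / n) *
    Real.sin (((((l:ℕ)+1) * (j+1) : ℕ) : ℝ) * π / n)) (n-1)]
  rcases le_or_gt (l:ℕ) (k:ℕ) with h | h
  · rw [SS_aux n (k:ℕ) (l:ℕ) hn k.isLt h]
    simp only [smul_eq_mul]
    by_cases hkl : k = l
    · rw [if_pos (by rw [hkl]), if_pos hkl, mul_one]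
    · rw [if_neg (fun hh => hkl (Fin.ext hh)), if_neg hkl, mul_zero]
  · rw [Finset.sum_congr rfl (fun j _ => mul_comm _ _),
      SS_aux n (l:ℕ) (k:ℕ) hn l.isLt (le_of_lt h)]
    simp only [smul_eq_mul]
    rw [if_neg (by omega), if_neg (fun hh => by subst hh; omega), mul_zero]

lemma Ssym (n : ℕ) : (Smat n)ᵀ = Smat n := by
  ext k j
  simp only [Matrix.transpose_apply, Smat, Matrix.of_apply]
  rw [Nat.mul_comm]

lemma Dsym (n : ℕ) : (Dmat n)ᵀ = Dmat n := by
  ext k l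
  simp only [Matrix.transpose_apply, Dmat, Matrix.of_apply]
  split_ifs <;> first | rfl | (exfalso; omega)

lemma Sigsym (n : ℕ) : (Sig n)ᵀ = Sig n := Matrix.diagonal_transpose _

/-- With `Û = Cᵀ U S` and `V̂ = S V C`, one has
`Γ Û Σ + Σ V̂ Γᵀ = S (B U D + D V Bᵀ) S`; in particular the transformed divergence
vanishes iff the discrete divergence vanishes. -/
theorem stmt10 (n : ℕ) (hn : 2 ≤ n)
    (U : Matrix (Fin n) (Fin (n - 1)) ℝ) (V : Matrix (Fin (n - 1)) (Fin n) ℝ)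
    (Uhat : Matrix (Fin n) (Fin (n - 1)) ℝ) (hUhat : Uhat = (Cmat n)ᵀ * U * Smat n)
    (Vhat : Matrix (Fin (n - 1)) (Fin n) ℝ) (hVhat : Vhat = Smat n * V * Cmat n) :
    Gam n * Uhat * Sig n + Sig n * Vhat * (Gam n)ᵀ =
      Smat n * (Bmat n * U * Dmat n + Dmat n * V * (Bmat n)ᵀ) * Smat n ∧
    (Gam n * Uhat * Sig n + Sig n * Vhat * (Gam n)ᵀ = 0 ↔
      Bmat n * U * Dmat n + Dmat n * V * (Bmat n)ᵀ = 0) := by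
  have hSigS : Sig n * Smat n = Smat n * Dmat n := by
    have h := congrArg Matrix.transpose (DSmul n hn)
    rw [Matrix.transpose_mul, Matrix.transpose_mul, Ssym, Sigsym, Dsym] at h
    exact h.symm
  have hCGt : Cmat n * (Gam n)ᵀ = (Bmat n)ᵀ * Smat n := by
    have h := congrArg Matrix.transpose (GamCT n hn)
    rw [Matrix.transpose_mul, Matrix.transpose_mul, Matrix.transpose_transpose, Ssym] at h
    exact h
  have e1 : Gam n * ((Cmat n)ᵀ * U * Smat n) * Sig n = Smat n * (Bmat n * U * Dmat n) * Smat n := by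
    simp only [← Matrix.mul_assoc]
    rw [GamCT n hn, Matrix.mul_assoc (Smat n * Bmat n * U) (Smat n) (Sig n),
      ← DSmul n hn, ← Matrix.mul_assoc]
  have e2 : Sig n * (Smat n * V * Cmat n) * (Gam n)ᵀ = Smat n * (Dmat n * V * (Bmat n)ᵀ) * Smat n := by
    simp only [← Matrix.mul_assoc]
    rw [hSigS, Matrix.mul_assoc (Smat n * Dmat n * V) (Cmat n) ((Gam n)ᵀ), hCGt,
      ← Matrix.mul_assoc]
  have part1 : Gam n * Uhat * Sig n + Sig n * Vhat * (Gam n)ᵀ =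
      Smat n * (Bmat n * U * Dmat n + Dmat n * V * (Bmat n)ᵀ) * Smat n := by
    rw [hUhat, hVhat, e1, e2, Matrix.mul_add, Matrix.add_mul]
  refine ⟨part1, ?_, ?_⟩
  · intro h0
    have hM : Smat n * (Bmat n * U * Dmat n + Dmat n * V * (Bmat n)ᵀ) * Smat n = 0 :=
      part1.symm.trans h0
    have h2 : Smat n * (Smat n * (Bmat n * U * Dmat n + Dmat n * V * (Bmat n)ᵀ) * Smat n) * Smat n =
        ((n:ℝ)/2 * ((n:ℝ)/2)) • (Bmat n * U * Dmat n + Dmat n * V * (Bmat n)ᵀ) := by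
      have hassoc : Smat n * (Smat n * (Bmat n * U * Dmat n + Dmat n * V * (Bmat n)ᵀ) * Smat n) * Smat n =
          (Smat n * Smat n) * (Bmat n * U * Dmat n + Dmat n * V * (Bmat n)ᵀ) * (Smat n * Smat n) := by
        simp only [Matrix.mul_assoc]
      rw [hassoc, SSid n hn, Matrix.smul_mul, Matrix.one_mul, Matrix.mul_smul, Matrix.mul_one,
        smul_smul]
    rw [hM, Matrix.mul_zero, Matrix.zero_mul] at h2
    have hc : ((n:ℝ)/2 * ((n:ℝ)/2)) ≠ 0 := by
      have : (0:ℝ) < (n:ℝ) := by exact_mod_cast (by omega : 0 < n)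
      positivity
    exact ((smul_eq_zero.mp h2.symm).resolve_left hc)
  · intro h0
    rw [part1, h0, Matrix.mul_zero, Matrix.zero_mul]
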